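/- Every maximal triple (S₁,S₂,S₃) of nonempty subsets of the special-color labels Λ_s satisfying the universal quantifier with respect to the special-color constraint ℰ_s is dominated by ({XY00, XY01, MM}, Λ_s, Λ_s) or by ({XY10, XY11, MM}, Λ_s, Λ_s), i.e., up to a permutation of the components each Sⱼ is contained in the corresponding component of one of these two triples. -/

import Mathlib

/-- A two-bit label: the first component is the input bit, the second the output bit. -/
abbrev TwoBit := Bool × Bool

def b00 : TwoBit := (false, false)
def b01 : TwoBit := (false, true)
def b10 : TwoBit := (true, false)
def b11 : TwoBit := (true, true)

/-- The 22 maximal bit triples. -/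
def bitTriples : List (Fin 3 → Set TwoBit) :=
  [ ![{b00, b10, b11}, {b00}, {b00}],
    ![{b01, b10, b11}, {b00}, {b01}],
    ![{b00, b10, b11}, {b01}, {b01}],
    ![{b00, b01, b11}, {b00}, {b10}],
    ![{b00, b01, b10}, {b00}, {b11}],
    ![{b00, b01, b10}, {b01}, {b10}],
    ![{b00, b01, b11}, {b01}, {b11}],
    ![{b01, b10, b11}, {b10}, {b10}],
    ![{b00, b10, b11}, {b10}, {b11}],
    ![{b01, b10, b11}, {b11}, {b11}],
    ![{b00, b10}, {b00}, {b00, b11}],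
    ![{b01, b11}, {b00}, {b01, b10}],
    ![{b00, b10}, {b01}, {b01, b10}],
    ![{b01, b11}, {b00, b11}, {b01}],
    ![{b00, b10}, {b01, b11}, {b10}],
    ![{b11}, {b00, b10}, {b00, b10}],
    ![{b10}, {b01, b10}, {b01, b10}],
    ![{b10}, {b00, b11}, {b00, b11}],
    ![{b00, b11}, {b01, b10}, {b11}],
    ![{b11}, {b01, b11}, {b01, b11}],
    ![{b10, b11}, {b00, b01}, {b00, b01}],
    ![{b10, b11}, {b10, b11}, {b10, b11}] ]

/-- The ten present-color labels Λ_p = {EE, MM, MY0, MY1, XM0, XM1, XY00, XY01, XY10, XY11}. -/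
inductive Lab where
  | EE : Lab
  | MM : Lab
  | MY : Bool → Lab
  | XM : Bool → Lab
  | XY : Bool → Bool → Lab
deriving DecidableEq

open Lab

/-- Augmentation of a set of two-bit labels: replace each two-bit label `xy` by `XY x y`;
add `XM x` if both `XY x 0` and `XY x 1` are present; add `MY y` if both `XY 0 y` and
`XY 1 y` are present; and always add `MM`. -/
def aug (T : Set TwoBit) : Set Lab :=
  {MM} ∪ {l | ∃ x y, (x, y) ∈ T ∧ l = XY x y}
    ∪ {l | ∃ x, (x, false) ∈ T ∧ (x, true) ∈ T ∧ l = XM x}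
    ∪ {l | ∃ y, (false, y) ∈ T ∧ (true, y) ∈ T ∧ l = MY y}

/-- The 23 condensed configurations defining the present-color constraint. -/
def condP : List (Fin 3 → Set Lab) :=
  bitTriples.map (fun T => fun j => aug (T j)) ++ [![{MM}, Set.univ, Set.univ]]

/-- The seven special-color labels Λ_s = {MM, MY0, MY1, XY00, XY01, XY10, XY11}. -/
inductive LabS where
  | MM : LabS
  | MY : Bool → LabS
  | XY : Bool → Bool → LabS
deriving DecidableEq

/-- The inclusion of the special-color labels Λ_s into the present-color labels Λ_p. -/
def embedS : LabS → Lab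
  | LabS.MM => Lab.MM
  | LabS.MY y => Lab.MY y
  | LabS.XY x y => Lab.XY x y

/-- The condensed configurations defining the special-color constraint, obtained from the
23 condensed configurations defining ℰ_p by deleting EE, XM0 and XM1 from every
component. -/
def condS : List (Fin 3 → Set LabS) :=
  condP.map (fun D => fun j => embedS ⁻¹' (D j))

/-- The special-color constraint ℰ_s: the family of size-3 multisets represented by the
condensed configurations `condS`. -/
def Es : Set (Multiset LabS) :=
  {C | ∃ D ∈ condS, ∃ l₁ ∈ D 0, ∃ l₂ ∈ D 1, ∃ l₃ ∈ D 2,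
    C = ({l₁, l₂, l₃} : Multiset LabS)}

/-- A triple of sets of special-color labels satisfies the universal quantifier w.r.t.
ℰ_s if every choice of one label per component yields a multiset in ℰ_s. -/
def EsUQ (S : Fin 3 → Set LabS) : Prop :=
  ∀ l₁ ∈ S 0, ∀ l₂ ∈ S 1, ∀ l₃ ∈ S 2, ({l₁, l₂, l₃} : Multiset LabS) ∈ Es

/-!
If every component of `S` contained a label other than `XY x0`, `XY x1`, `MM` for both
values of `x`, each component would offer a label readable with input bit `0` and one readable
with input bit `1`. Reading the four triples with inputs `000`, `110`, `101`, `011` gives four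
valid bit configurations, hence four parity equations in which every output bit occurs twice
while the right-hand sides add up to `1`: a contradiction. So some component lies in
`{XY x0, XY x1, MM}`, which is domination after moving that component to the front.
-/

/-- The validity condition on a size-3 multiset of two-bit labels, phrased via counts so that
it is visibly independent of the order of the labels. -/
def ValidBits (m : Multiset TwoBit) : Prop :=
  Even ((m.map Prod.fst).count true) →
    (Odd ((m.map Prod.snd).count true) ↔ true ∈ m.map Prod.fst)

theorem validBits_triple_iff (p q r : TwoBit) :
    ValidBits {p, q, r} ↔
      ((p.1 ^^ q.1 ^^ r.1) = false → (p.2 ^^ q.2 ^^ r.2) = (p.1 || q.1 || r.1)) := by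
  obtain ⟨x₁, y₁⟩ := p; obtain ⟨x₂, y₂⟩ := q; obtain ⟨x₃, y₃⟩ := r
  cases x₁ <;> cases x₂ <;> cases x₃ <;> cases y₁ <;> cases y₂ <;> cases y₃ <;>
    simp +decide [ValidBits]

theorem validBits_of_mem_bitTriples {T : Fin 3 → Set TwoBit} (hT : T ∈ bitTriples)
    {p q r : TwoBit} (hp : p ∈ T 0) (hq : q ∈ T 1) (hr : r ∈ T 2) : ValidBits {p, q, r} := by
  rw [validBits_triple_iff]
  simp only [bitTriples, List.mem_cons, List.not_mem_nil, or_false] at hT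
  rcases hT with rfl | rfl | rfl | rfl | rfl | rfl | rfl | rfl | rfl | rfl | rfl |
      rfl | rfl | rfl | rfl | rfl | rfl | rfl | rfl | rfl | rfl | rfl <;>
    simp only [Matrix.cons_val_zero, Matrix.cons_val_one, Matrix.cons_val_two,
      Set.mem_insert_iff, Set.mem_singleton_iff] at hp hq hr <;>
    rcases hp with rfl | rfl | rfl <;> rcases hq with rfl | rfl | rfl <;>
    rcases hr with rfl | rfl | rfl <;> decide

def LabS.bits : LabS → Set TwoBit
  | .MM => ∅
  | .MY y => {p | p.2 = y}
  | .XY x y => {(x, y)}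

theorem LabS.bits_subset_of_embedS_mem_aug {l : LabS} {T : Set TwoBit}
    (h : embedS l ∈ aug T) : l.bits ⊆ T := by
  rintro ⟨x, y⟩ hp
  cases l with
  | MM => exact absurd hp (Set.notMem_empty _)
  | MY y' =>
    simp only [aug, embedS, Set.mem_union, Set.mem_ofPred_eq, Set.mem_singleton_iff,
      reduceCtorEq, and_false, exists_false, or_false, false_or, Lab.MY.injEq] at h
    obtain ⟨_, h₀, h₁, rfl⟩ := h
    obtain rfl : y = _ := hp
    cases x <;> assumption
  | XY x' y' =>
    simp only [aug, embedS, Set.mem_union, Set.mem_ofPred_eq, Set.mem_singleton_iff,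
      reduceCtorEq, and_false, exists_false, or_false, false_or, Lab.XY.injEq] at h
    obtain ⟨_, _, hT, rfl, rfl⟩ := h
    obtain ⟨rfl, rfl⟩ := Prod.mk.inj hp
    exact hT

theorem validBits_of_mem_Es {a b c : LabS} (h : ({a, b, c} : Multiset LabS) ∈ Es)
    {p q r : TwoBit} (hp : p ∈ a.bits) (hq : q ∈ b.bits) (hr : r ∈ c.bits) :
    ValidBits {p, q, r} := by
  obtain ⟨D, hD, l₁, h₁, l₂, h₂, l₃, h₃, hl⟩ := h
  have hrel : Multiset.Rel (fun p l => p ∈ LabS.bits l) {p, q, r} {l₁, l₂, l₃} := by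
    rw [← hl]
    exact .cons hp (.cons hq (.cons hr .zero))
  simp only [Multiset.insert_eq_cons, ← Multiset.cons_zero, Multiset.rel_cons_right,
    Multiset.rel_zero_right] at hrel
  obtain ⟨p₁, _, hp₁, ⟨p₂, _, hp₂, ⟨p₃, _, hp₃, rfl, rfl⟩, rfl⟩, hm⟩ := hrel
  rw [show ({p, q, r} : Multiset TwoBit) = {p₁, p₂, p₃} from hm]
  simp only [condS, condP, List.map_append, List.map_map, List.mem_append, List.mem_map,
    List.mem_singleton, exists_eq_left] at hD
  rcases hD with ⟨T, hT, rfl⟩ | rfl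
  · exact validBits_of_mem_bitTriples hT
      (LabS.bits_subset_of_embedS_mem_aug h₁ hp₁) (LabS.bits_subset_of_embedS_mem_aug h₂ hp₂)
      (LabS.bits_subset_of_embedS_mem_aug h₃ hp₃)
  · obtain rfl : l₁ = LabS.MM := by cases l₁ <;> simp_all [embedS]
    exact absurd hp₁ (Set.notMem_empty _)

theorem not_validBits_of_inputs {a₀ a₁ a₂ b₀ b₁ b₂ : Bool}
    (h₀ : ValidBits {(false, b₀), (false, b₁), (false, b₂)})
    (h₁ : ValidBits {(true, a₀), (true, a₁), (false, b₂)})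
    (h₂ : ValidBits {(true, a₀), (false, b₁), (true, a₂)})
    (h₃ : ValidBits {(false, b₀), (true, a₁), (true, a₂)}) : False := by
  simp only [validBits_triple_iff] at h₀ h₁ h₂ h₃
  revert a₀ a₁ a₂ b₀ b₁ b₂
  decide

theorem LabS.exists_mem_bits_of_notMem {x : Bool} {l : LabS}
    (h : l ∉ ({.XY x false, .XY x true, .MM} : Set LabS)) : ∃ y, (!x, y) ∈ l.bits := by
  simp only [Set.mem_insert_iff, Set.mem_singleton_iff, not_or] at h
  rcases l with _ | y | ⟨x', y⟩
  · exact absurd rfl h.2.2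
  · exact ⟨y, rfl⟩
  · refine ⟨y, ?_⟩
    cases x <;> cases x' <;> cases y <;> simp_all [LabS.bits]

theorem EsUQ.exists_subset {S : Fin 3 → Set LabS} (hS : EsUQ S) :
    ∃ j x, S j ⊆ {.XY x false, .XY x true, .MM} := by
  by_contra! h
  have hA : ∀ j, ∃ l ∈ S j, ∃ y, (true, y) ∈ l.bits := fun j => by
    obtain ⟨l, hl, hn⟩ := Set.not_subset.mp (h j false)
    exact ⟨l, hl, LabS.exists_mem_bits_of_notMem hn⟩
  have hB : ∀ j, ∃ l ∈ S j, ∃ y, (false, y) ∈ l.bits := fun j => by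
    obtain ⟨l, hl, hn⟩ := Set.not_subset.mp (h j true)
    exact ⟨l, hl, LabS.exists_mem_bits_of_notMem hn⟩
  choose a haS ya hya using hA
  choose b hbS yb hyb using hB
  exact not_validBits_of_inputs
    (validBits_of_mem_Es (hS _ (hbS 0) _ (hbS 1) _ (hbS 2)) (hyb 0) (hyb 1) (hyb 2))
    (validBits_of_mem_Es (hS _ (haS 0) _ (haS 1) _ (hbS 2)) (hya 0) (hya 1) (hyb 2))
    (validBits_of_mem_Es (hS _ (haS 0) _ (hbS 1) _ (haS 2)) (hya 0) (hyb 1) (hya 2))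
    (validBits_of_mem_Es (hS _ (hbS 0) _ (haS 1) _ (haS 2)) (hyb 0) (hya 1) (hya 2))

theorem exists_perm_subset_of_subset {α : Type*} {S : Fin 3 → Set α} {A : Set α} {j : Fin 3}
    (hj : S j ⊆ A) : ∃ ρ : Equiv.Perm (Fin 3), ∀ k, S k ⊆ ![A, Set.univ, Set.univ] (ρ k) := by
  refine ⟨Equiv.swap j 0, fun k => ?_⟩
  rcases eq_or_ne k j with rfl | hk
  · simpa using hj
  · have hρk : Equiv.swap j 0 k ≠ 0 := by simpa using (Equiv.swap j 0).injective.ne hk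
    generalize Equiv.swap j 0 k = m at hρk
    fin_cases m
    · exact absurd rfl hρk
    all_goals exact Set.subset_univ _

theorem special_color_maximal_dominated_general (S : Fin 3 → Set LabS)
    (hUQ : EsUQ S) :
    (∃ ρ : Equiv.Perm (Fin 3), ∀ j,
        S j ⊆ (![{LabS.XY false false, LabS.XY false true, LabS.MM},
                  Set.univ, Set.univ] : Fin 3 → Set LabS) (ρ j)) ∨
    (∃ ρ : Equiv.Perm (Fin 3), ∀ j,
        S j ⊆ (![{LabS.XY true false, LabS.XY true true, LabS.MM},
                  Set.univ, Set.univ] : Fin 3 → Set LabS) (ρ j)) := by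
  obtain ⟨j, x, hj⟩ := hUQ.exists_subset
  cases x
  · exact Or.inl (exists_perm_subset_of_subset hj)
  · exact Or.inr (exists_perm_subset_of_subset hj)

/-- **Domination of the maximal special-color triples.** Every maximal triple of nonempty
subsets of Λ_s satisfying the universal quantifier w.r.t. ℰ_s is dominated by
({XY00, XY01, MM}, Λ_s, Λ_s) or by ({XY10, XY11, MM}, Λ_s, Λ_s): up to a permutation of
the components, each S j is contained in the corresponding component. -/
theorem special_color_maximal_dominated (S : Fin 3 → Set LabS)
    (hne : ∀ j, (S j).Nonempty)
    (hUQ : EsUQ S)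
    (hmax : ¬ ∃ S' : Fin 3 → Set LabS,
        EsUQ S' ∧ (∀ j, S j ⊆ S' j) ∧ (∃ j, S j ⊂ S' j)) :
    (∃ ρ : Equiv.Perm (Fin 3), ∀ j,
        S j ⊆ (![{LabS.XY false false, LabS.XY false true, LabS.MM},
                  Set.univ, Set.univ] : Fin 3 → Set LabS) (ρ j)) ∨
    (∃ ρ : Equiv.Perm (Fin 3), ∀ j,
        S j ⊆ (![{LabS.XY true false, LabS.XY true true, LabS.MM},
                  Set.univ, Set.univ] : Fin 3 → Set LabS) (ρ j)) :=
  special_color_maximal_dominated_general S hUQ
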